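/- Let t_1,…,t_5 be positive reals satisfying Assumption 1. Then, as T → ∞, E_AA(T) + E_AB(T) = (1/384)·(Σ_{{s_1,s_2,s_3,s_4} ⊂ {t_1,…,t_5}} 1/(s_1 s_2 s_3 s_4))·T^4 + (Σ_{{s_1,s_2,s_3,s_4} ⊂ {t_1,…,t_5}} R(2s_1,2s_2,2s_3,2s_4) − (1/96)·(2/(t_2 t_4 t_5) + 2/(t_1 t_4 t_5) + t_3/(t_1 t_2 t_4 t_5) + 1/(t_1 t_2 t_4) + 1/(t_1 t_2 t_5)))·T^3 + o(T^3), where both sums run over all five 4-element subsets of {t_1,…,t_5}. -/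

import Mathlib

/-!
Every `W`-term of `E_AA + E_AB` has an expansion `a T⁴ + b T³ + o(T³)` by Assumption 1, with
`a = 0` for three parameters and `a = b = 0` for at most two, so the sum has one as well. The
only new contributions come from the shift `T ↦ T - t₃` in `E_AB`: since
`(T - t₃)⁴ = T⁴ - 4 t₃ T³ + O(T²)`, it adds `-4 t₃ a` to the cubic coefficient of each
four-parameter term, which gives the summands `t₃/(t₁t₂t₄t₅)`, `1/(t₁t₂t₅)` and `1/(t₁t₂t₄)`.
-/

open Filter Asymptotics

/-- `W(s₁, …, s_m; T)`: the number of `m`-tuples of nonnegative integers `(n₁, …, n_m)` with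
`s₁ n₁ + ⋯ + s_m n_m ≤ T`. -/
noncomputable def W {m : ℕ} (s : Fin m → ℝ) (T : ℝ) : ℕ :=
  Nat.card {n : Fin m → ℕ | ∑ i, (n i : ℝ) * s i ≤ T}

/-- `E_AA(T) = W(2t₁,2t₃,2t₄,2t₅;T) + W(2t₂,2t₃,2t₄,2t₅;T) − W(2t₁,2t₄,2t₅;T)
  − W(2t₂,2t₄,2t₅;T) + W(2t₁,2t₂;T) + W(2t₁;T) + W(2t₂;T)`. -/
noncomputable def EAA (t₁ t₂ t₃ t₄ t₅ T : ℝ) : ℤ :=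
  (W ![2*t₁, 2*t₃, 2*t₄, 2*t₅] T : ℤ) + (W ![2*t₂, 2*t₃, 2*t₄, 2*t₅] T : ℤ)
    - (W ![2*t₁, 2*t₄, 2*t₅] T : ℤ) - (W ![2*t₂, 2*t₄, 2*t₅] T : ℤ)
    + (W ![2*t₁, 2*t₂] T : ℤ) + (W ![2*t₁] T : ℤ) + (W ![2*t₂] T : ℤ)

/-- `E_AB(T) = W(2t₁,2t₂,2t₄,2t₅;T−t₃) + W(2t₁,2t₂,2t₃,2t₅;T−t₃) + W(2t₁,2t₂,2t₃,2t₄;T−t₃)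
  − W(2t₁,2t₂;T−t₃)`. -/
noncomputable def EAB (t₁ t₂ t₃ t₄ t₅ T : ℝ) : ℤ :=
  (W ![2*t₁, 2*t₂, 2*t₄, 2*t₅] (T - t₃) : ℤ) + (W ![2*t₁, 2*t₂, 2*t₃, 2*t₅] (T - t₃) : ℤ)
    + (W ![2*t₁, 2*t₂, 2*t₃, 2*t₄] (T - t₃) : ℤ) - (W ![2*t₁, 2*t₂] (T - t₃) : ℤ)

theorem const_mul_comp_vecCons {α β : Type*} [Mul β] {n : ℕ} (c : β) (v : α → β) (a : α)
    (u : Fin n → α) :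
    (fun i => c * v (Matrix.vecCons a u i)) = Matrix.vecCons (c * v a) fun i => c * v (u i) :=
  funext fun i => Fin.cases rfl (fun _ => rfl) i

theorem isBigO_sub_const_pow_atTop (c : ℝ) (n : ℕ) :
    (fun T : ℝ => (T - c) ^ n) =O[atTop] (· ^ n) :=
  ((isBigO_refl id atTop).sub (isLittleO_const_id_atTop c).isBigO).pow n

theorem Asymptotics.IsLittleO.comp_sub_const_atTop {f : ℝ → ℝ} {n : ℕ} (c : ℝ)
    (hf : f =o[atTop] (· ^ n)) : (fun T => f (T - c)) =o[atTop] (· ^ n) :=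
  (hf.comp_tendsto (tendsto_atTop_add_const_right atTop (-c) tendsto_id)).trans_isBigO
    (isBigO_sub_const_pow_atTop c n)

theorem isLittleO_quadratic_cube (a b c : ℝ) :
    (fun T : ℝ => a * T ^ 2 + b * T + c) =o[atTop] (· ^ 3) := by
  have hT₂ : (fun T : ℝ => T ^ 2) =o[atTop] (· ^ 3) := isLittleO_pow_pow_atTop_of_lt (by norm_num)
  have hT₁ : (fun T : ℝ => T ^ 1) =o[atTop] (· ^ 3) := isLittleO_pow_pow_atTop_of_lt (by norm_num)
  have hT₀ : (fun T : ℝ => T ^ 0) =o[atTop] (· ^ 3) := isLittleO_pow_pow_atTop_of_lt (by norm_num)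
  exact ((hT₂.const_mul_left a).add (hT₁.const_mul_left b)).add (hT₀.const_mul_left c)
    |>.congr_left fun T => by ring

theorem isLittleO_quartic_comp_sub_const {f : ℝ → ℝ} {a b : ℝ} (c : ℝ)
    (hf : (fun T => f T - a * T ^ 4 - b * T ^ 3) =o[atTop] (· ^ 3)) :
    (fun T => f (T - c) - a * T ^ 4 - (b - 4 * a * c) * T ^ 3) =o[atTop] (· ^ 3) :=
  (hf.comp_sub_const_atTop c).add
      (isLittleO_quadratic_cube (6 * a * c ^ 2 - 3 * b * c) (3 * b * c ^ 2 - 4 * a * c ^ 3)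
        (a * c ^ 4 - b * c ^ 3))
    |>.congr_left fun T => by ring

theorem EAA_add_EAB_asymptotics_general (t₁ t₂ t₃ t₄ t₅ : ℝ)
    (h₃ : 0 < t₃)
    (R : ℝ → ℝ → ℝ → ℝ → ℝ)
    (hW4 : ∀ σ : Fin 4 → Fin 5, Function.Injective σ →
      (fun T : ℝ => (W (fun i => 2 * ![t₁, t₂, t₃, t₄, t₅] (σ i)) T : ℝ)
          - T ^ 4 / (384 * ∏ i, ![t₁, t₂, t₃, t₄, t₅] (σ i))
          - R (2 * ![t₁, t₂, t₃, t₄, t₅] (σ 0)) (2 * ![t₁, t₂, t₃, t₄, t₅] (σ 1))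
              (2 * ![t₁, t₂, t₃, t₄, t₅] (σ 2)) (2 * ![t₁, t₂, t₃, t₄, t₅] (σ 3)) * T ^ 3)
        =o[atTop] fun T : ℝ => T ^ 3)
    (hW3 : ∀ σ : Fin 3 → Fin 5, Function.Injective σ →
      (fun T : ℝ => (W (fun i => 2 * ![t₁, t₂, t₃, t₄, t₅] (σ i)) T : ℝ)
          - T ^ 3 / (48 * ∏ i, ![t₁, t₂, t₃, t₄, t₅] (σ i)))
        =o[atTop] fun T : ℝ => T ^ 3)
    (hW2 : ∀ (m : ℕ), m ≤ 2 → ∀ σ : Fin m → Fin 5, Function.Injective σ →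
      (fun T : ℝ => (W (fun i => 2 * ![t₁, t₂, t₃, t₄, t₅] (σ i)) T : ℝ))
        =o[atTop] fun T : ℝ => T ^ 3) :
    (fun T : ℝ => (EAA t₁ t₂ t₃ t₄ t₅ T : ℝ) + (EAB t₁ t₂ t₃ t₄ t₅ T : ℝ)
        - (1/384) * (1/(t₂*t₃*t₄*t₅) + 1/(t₁*t₃*t₄*t₅) + 1/(t₁*t₂*t₄*t₅)
            + 1/(t₁*t₂*t₃*t₅) + 1/(t₁*t₂*t₃*t₄)) * T ^ 4
        - (R (2*t₂) (2*t₃) (2*t₄) (2*t₅) + R (2*t₁) (2*t₃) (2*t₄) (2*t₅)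
            + R (2*t₁) (2*t₂) (2*t₄) (2*t₅) + R (2*t₁) (2*t₂) (2*t₃) (2*t₅)
            + R (2*t₁) (2*t₂) (2*t₃) (2*t₄)
            - (1/96) * (2/(t₂*t₄*t₅) + 2/(t₁*t₄*t₅) + t₃/(t₁*t₂*t₄*t₅)
                + 1/(t₁*t₂*t₄) + 1/(t₁*t₂*t₅))) * T ^ 3)
      =o[atTop] fun T : ℝ => T ^ 3 := by
  have hA₁ := hW4 ![0, 2, 3, 4] (by decide)
  have hA₂ := hW4 ![1, 2, 3, 4] (by decide)
  have hA₃ := hW3 ![0, 3, 4] (by decide)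
  have hA₄ := hW3 ![1, 3, 4] (by decide)
  have hA₅ := hW2 2 le_rfl ![0, 1] (by decide)
  have hA₆ := hW2 1 one_le_two ![0] (by decide)
  have hA₇ := hW2 1 one_le_two ![1] (by decide)
  have hB₁ := hW4 ![0, 1, 3, 4] (by decide)
  have hB₂ := hW4 ![0, 1, 2, 4] (by decide)
  have hB₃ := hW4 ![0, 1, 2, 3] (by decide)
  simp only [Fin.prod_univ_four, Fin.prod_univ_three, const_mul_comp_vecCons, Matrix.empty_eq,
    Matrix.cons_val, div_eq_inv_mul] at hA₁ hA₂ hA₃ hA₄ hA₅ hA₆ hA₇ hB₁ hB₂ hB₃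
  have hsum := ((((((((((hA₁.add hA₂).sub hA₃).sub hA₄).add hA₅).add hA₆).add hA₇).add
    (isLittleO_quartic_comp_sub_const t₃ hB₁)).add (isLittleO_quartic_comp_sub_const t₃ hB₂)).add
    (isLittleO_quartic_comp_sub_const t₃ hB₃)).sub (hA₅.comp_sub_const_atTop t₃))
  refine hsum.congr_left fun T => ?_
  simp only [EAA, EAB]
  push_cast
  -- `ring` cannot cancel `t₃ * t₃⁻¹`
  have hcancel₄ : t₃ / (t₁ * t₂ * t₃ * t₄) = 1 / (t₁ * t₂ * t₄) := by field_simp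
  have hcancel₅ : t₃ / (t₁ * t₂ * t₃ * t₅) = 1 / (t₁ * t₂ * t₅) := by field_simp
  rw [← hcancel₄, ← hcancel₅]
  ring

/-- under Assumption 1 (hypotheses `hW4`, `hW3`, `hW2` below),
`E_AA(T) + E_AB(T) = (1/384)·(Σ 1/(s₁s₂s₃s₄))·T⁴
  + (Σ R(2s₁,2s₂,2s₃,2s₄) − (1/96)·(2/(t₂t₄t₅) + 2/(t₁t₄t₅) + t₃/(t₁t₂t₄t₅)
      + 1/(t₁t₂t₄) + 1/(t₁t₂t₅)))·T³ + o(T³)` as `T → ∞`, both sums running over all five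
4-element subsets `{s₁,s₂,s₃,s₄}` of `{t₁,…,t₅}`. -/
theorem EAA_add_EAB_asymptotics (t₁ t₂ t₃ t₄ t₅ : ℝ)
    (h₁ : 0 < t₁) (h₂ : 0 < t₂) (h₃ : 0 < t₃) (h₄ : 0 < t₄) (h₅ : 0 < t₅)
    (R : ℝ → ℝ → ℝ → ℝ → ℝ)
    (hW4 : ∀ σ : Fin 4 → Fin 5, Function.Injective σ →
      (fun T : ℝ => (W (fun i => 2 * ![t₁, t₂, t₃, t₄, t₅] (σ i)) T : ℝ)
          - T ^ 4 / (384 * ∏ i, ![t₁, t₂, t₃, t₄, t₅] (σ i))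
          - R (2 * ![t₁, t₂, t₃, t₄, t₅] (σ 0)) (2 * ![t₁, t₂, t₃, t₄, t₅] (σ 1))
              (2 * ![t₁, t₂, t₃, t₄, t₅] (σ 2)) (2 * ![t₁, t₂, t₃, t₄, t₅] (σ 3)) * T ^ 3)
        =o[atTop] fun T : ℝ => T ^ 3)
    (hW3 : ∀ σ : Fin 3 → Fin 5, Function.Injective σ →
      (fun T : ℝ => (W (fun i => 2 * ![t₁, t₂, t₃, t₄, t₅] (σ i)) T : ℝ)
          - T ^ 3 / (48 * ∏ i, ![t₁, t₂, t₃, t₄, t₅] (σ i)))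
        =o[atTop] fun T : ℝ => T ^ 3)
    (hW2 : ∀ (m : ℕ), m ≤ 2 → ∀ σ : Fin m → Fin 5, Function.Injective σ →
      (fun T : ℝ => (W (fun i => 2 * ![t₁, t₂, t₃, t₄, t₅] (σ i)) T : ℝ))
        =o[atTop] fun T : ℝ => T ^ 3) :
    (fun T : ℝ => (EAA t₁ t₂ t₃ t₄ t₅ T : ℝ) + (EAB t₁ t₂ t₃ t₄ t₅ T : ℝ)
        - (1/384) * (1/(t₂*t₃*t₄*t₅) + 1/(t₁*t₃*t₄*t₅) + 1/(t₁*t₂*t₄*t₅)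
            + 1/(t₁*t₂*t₃*t₅) + 1/(t₁*t₂*t₃*t₄)) * T ^ 4
        - (R (2*t₂) (2*t₃) (2*t₄) (2*t₅) + R (2*t₁) (2*t₃) (2*t₄) (2*t₅)
            + R (2*t₁) (2*t₂) (2*t₄) (2*t₅) + R (2*t₁) (2*t₂) (2*t₃) (2*t₅)
            + R (2*t₁) (2*t₂) (2*t₃) (2*t₄)
            - (1/96) * (2/(t₂*t₄*t₅) + 2/(t₁*t₄*t₅) + t₃/(t₁*t₂*t₄*t₅)
                + 1/(t₁*t₂*t₄) + 1/(t₁*t₂*t₅))) * T ^ 3)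
      =o[atTop] fun T : ℝ => T ^ 3 :=
  EAA_add_EAB_asymptotics_general t₁ t₂ t₃ t₄ t₅ h₃ R hW4 hW3 hW2
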